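/- Let A and B be two finite multisets in ℤ_p that are weakly equivalent, and suppose that A has p-adic non-Liouville differences. Then A and B are equivalent. -/

import Mathlib

/-!
For large `m` the matchings `σ_m` and `σ_(m+1)` can only send `b_i` to elements of `A` that
differ by an integer: both are within `O(m)` of `b_i` in the sense of `d_m`, while a non-integral
difference of elements of `A`, being non-Liouville, has `d_m` eventually above any linear
function. Hence, from some `M` on, `a_(σ_m i)` differs from `a_(σ_M i)` by an integer of bounded
size, so `d_m(a_(σ_M i) - b_i) = O(m)` for all large `m`; and a `p`-adic integer whose best
integer approximations modulo `p^m` have size `O(m)` is an integer.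
-/

open Filter

/-- `padicDist p m a` is `d_m(a) = min {|h| : h ∈ ℤ, a ≡ h (mod p^m ℤ_p)}`. -/
noncomputable def padicDist (p : ℕ) [Fact p.Prime] (m : ℕ) (a : ℤ_[p]) : ℕ :=
  sInf {k : ℕ | ∃ h : ℤ, h.natAbs = k ∧ (p : ℤ_[p]) ^ m ∣ a - (h : ℤ_[p])}

/-- `a ∈ ℤ_p` is a p-adic Liouville number if `a ∉ ℤ` and
`liminf_{m→∞} d_m(a)/m < +∞`. -/
def IsPadicLiouville (p : ℕ) [Fact p.Prime] (a : ℤ_[p]) : Prop :=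
  (∀ n : ℤ, a ≠ (n : ℤ_[p])) ∧
    liminf (fun m : ℕ => (((padicDist p m a : ℝ) / (m : ℝ)) : EReal)) atTop < (⊤ : EReal)

/-- Two finite multisets in `ℤ_p` are weakly equivalent: there exist orderings
`a_1,…,a_n`, `b_1,…,b_n`, a constant `c > 0`, and for each `m ≥ 1` a permutation `σ_m`
with `d_m(a_{σ_m i} - b_i) ≤ c m`. -/
def WeaklyEquivalent (p : ℕ) [Fact p.Prime] (A B : Multiset ℤ_[p]) : Prop :=
  ∃ (n : ℕ) (a b : Fin n → ℤ_[p]) (c : ℝ),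
    A = ↑(List.ofFn a) ∧ B = ↑(List.ofFn b) ∧ 0 < c ∧
    ∀ m : ℕ, 1 ≤ m → ∃ σ : Equiv.Perm (Fin n),
      ∀ i, (padicDist p m (a (σ i) - b i) : ℝ) ≤ c * m

/-- Two finite multisets in `ℤ_p` are equivalent: there exist orderings with
`a_i - b_i ∈ ℤ` for all `i`. -/
def EquivalentMultisets (p : ℕ) [Fact p.Prime] (A B : Multiset ℤ_[p]) : Prop :=
  ∃ (n : ℕ) (a b : Fin n → ℤ_[p]),
    A = ↑(List.ofFn a) ∧ B = ↑(List.ofFn b) ∧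
    ∀ i, ∃ k : ℤ, a i - b i = (k : ℤ_[p])

/-- `P 0, …, P (k-1)` form a Liouville partition of `A`: their multiset union is `A` and
no two elements of distinct parts differ by an integer or a p-adic Liouville number. -/
def IsLiouvillePartition (p : ℕ) [Fact p.Prime] (A : Multiset ℤ_[p]) {k : ℕ}
    (P : Fin k → Multiset ℤ_[p]) : Prop :=
  (∑ g, P g) = A ∧
    ∀ g h : Fin k, g ≠ h → ∀ x ∈ P g, ∀ y ∈ P h,
      ¬ ((∃ n : ℤ, x - y = (n : ℤ_[p])) ∨ IsPadicLiouville p (x - y))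

/-- A multiset is p-adic non-Liouville if it contains no p-adic Liouville number. -/
def PadicNonLiouvilleMultiset (p : ℕ) [Fact p.Prime] (A : Multiset ℤ_[p]) : Prop :=
  ∀ a ∈ A, ¬ IsPadicLiouville p a

/-- The difference multiset `A - A = {a - a' : a, a' ∈ A}`. -/
noncomputable def diffMultiset (p : ℕ) [Fact p.Prime] (A : Multiset ℤ_[p]) : Multiset ℤ_[p] :=
  A.bind fun x => A.map fun y => x - y

open Asymptotics

theorem eventually_mul_add_lt_pow {r : ℝ} (hr : 1 < r) (C K : ℝ) :
    ∀ᶠ m : ℕ in atTop, C * m + K < r ^ m := by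
  have hlin : (fun m : ℕ => C * m + K) =o[atTop] fun m => r ^ m := by
    simpa using ((isLittleO_pow_const_const_pow_of_one_lt (R := ℝ) 1 hr).const_mul_left C).add
      ((isLittleO_pow_const_const_pow_of_one_lt (R := ℝ) 0 hr).const_mul_left K)
  filter_upwards [hlin.def one_half_pos] with m hm
  have hpos : 0 < r ^ m := pow_pos (by linarith) m
  rw [Real.norm_of_nonneg hpos.le, Real.norm_eq_abs] at hm
  linarith [le_abs_self (C * m + K)]

theorem exists_natAbs_le_of_eq_intCast {ι R : Type*} [Finite ι] [AddGroupWithOne R] [CharZero R]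
    (f : ι → R) : ∃ K : ℕ, ∀ i (k : ℤ), f i = k → k.natAbs ≤ K := by
  have hbound : ∀ i, ∃ K : ℕ, ∀ k : ℤ, f i = k → k.natAbs ≤ K := fun i => by
    by_cases hexists : ∃ k : ℤ, f i = k
    · obtain ⟨k, hk⟩ := hexists
      exact ⟨k.natAbs, fun k' hk' => (Int.cast_injective (hk.symm.trans hk') : k = k') ▸ le_rfl⟩
    · exact ⟨0, fun k hk => absurd ⟨k, hk⟩ hexists⟩
  choose K hK using hbound
  obtain ⟨M, hM⟩ := Finite.exists_le K
  exact ⟨M, fun i k hk => (hK i k hk).trans (hM i)⟩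

theorem exists_sub_eq_intCast_of_forall_succ {R : Type*} [Ring R] {f : ℕ → R} {M : ℕ}
    (h : ∀ m ≥ M, ∃ k : ℤ, f (m + 1) - f m = k) : ∀ m ≥ M, ∃ k : ℤ, f m - f M = k := by
  intro m hm
  induction m, hm using Nat.le_induction with
  | base => exact ⟨0, by simp⟩
  | succ m hm ih =>
    obtain ⟨k, hk⟩ := h m hm
    obtain ⟨l, hl⟩ := ih
    exact ⟨k + l, by push_cast; rw [← hk, ← hl]; abel⟩

namespace PadicInt

variable {p : ℕ} [Fact p.Prime]

theorem pow_dvd_intCast_iff {m : ℕ} {k : ℤ} : (p : ℤ_[p]) ^ m ∣ (k : ℤ_[p]) ↔ (p : ℤ) ^ m ∣ k := by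
  rw [← Ideal.mem_span_singleton, ← norm_le_pow_iff_mem_span_pow, norm_int_le_pow_iff_dvd]

theorem eq_zero_of_forall_pow_dvd {x : ℤ_[p]} (h : ∀ m, (p : ℤ_[p]) ^ m ∣ x) : x = 0 :=
  ext_of_toZModPow.1 fun m => by
    rw [map_zero, ← RingHom.mem_ker, ker_toZModPow, Ideal.mem_span_singleton]
    exact h m

end PadicInt

section padicDist

variable {p : ℕ} [Fact p.Prime]

theorem exists_natAbs_eq_padicDist (m : ℕ) (x : ℤ_[p]) :
    ∃ h : ℤ, h.natAbs = padicDist p m x ∧ (p : ℤ_[p]) ^ m ∣ x - h := by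
  refine Nat.sInf_mem (s := {k | ∃ h : ℤ, h.natAbs = k ∧ (p : ℤ_[p]) ^ m ∣ x - h})
    ⟨_, x.appr m, rfl, ?_⟩
  simpa [Ideal.mem_span_singleton] using x.appr_spec m

theorem padicDist_le_natAbs {m : ℕ} {x : ℤ_[p]} {h : ℤ} (hd : (p : ℤ_[p]) ^ m ∣ x - h) :
    padicDist p m x ≤ h.natAbs :=
  Nat.sInf_le ⟨h, rfl, hd⟩

theorem padicDist_intCast_le (m : ℕ) (k : ℤ) : padicDist p m (k : ℤ_[p]) ≤ k.natAbs :=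
  padicDist_le_natAbs (by simp)

theorem padicDist_sub_le (m : ℕ) (x y : ℤ_[p]) :
    padicDist p m (x - y) ≤ padicDist p m x + padicDist p m y := by
  obtain ⟨h, hh, hx⟩ := exists_natAbs_eq_padicDist m x
  obtain ⟨k, hk, hy⟩ := exists_natAbs_eq_padicDist m y
  have hd : (p : ℤ_[p]) ^ m ∣ x - y - ((h - k : ℤ) : ℤ_[p]) := by
    simpa [sub_sub_sub_comm] using dvd_sub hx hy
  calc padicDist p m (x - y) ≤ (h - k).natAbs := padicDist_le_natAbs hd
    _ ≤ h.natAbs + k.natAbs := Int.natAbs_sub_le h k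
    _ = _ := by rw [hh, hk]

theorem padicDist_monotone (x : ℤ_[p]) : Monotone fun m => padicDist p m x := fun m m' hm => by
  obtain ⟨h, hh, hd⟩ := exists_natAbs_eq_padicDist m' x
  show padicDist p m x ≤ padicDist p m' x
  rw [← hh]
  exact padicDist_le_natAbs ((pow_dvd_pow _ hm).trans hd)

/-- The best approximations `h_m` of `x` satisfy `p ^ m ∣ h_(m+1) - h_m` and
`|h_(m+1) - h_m| = O(m) < p ^ m`, so they are eventually constant, and then equal to `x`. -/
theorem exists_eq_intCast_of_eventually_padicDist_le {x : ℤ_[p]} {C K : ℝ}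
    (H : ∀ᶠ m in atTop, (padicDist p m x : ℝ) ≤ C * m + K) : ∃ k : ℤ, x = k := by
  choose h hh hdvd using fun m => exists_natAbs_eq_padicDist (p := p) m x
  have habs : ∀ m, (padicDist p m x : ℝ) = |(h m : ℝ)| := fun m => by
    rw [← hh, Nat.cast_natAbs, Int.cast_abs]
  have hp : (1 : ℝ) < p := mod_cast (Fact.out : p.Prime).one_lt
  have hstep : ∀ᶠ m in atTop, h (m + 1) = h m := by
    filter_upwards [H, (tendsto_add_atTop_nat 1).eventually H,
      eventually_mul_add_lt_pow hp (2 * C) (C + 2 * K)] with m hm hm' hlt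
    refine sub_eq_zero.1 (Int.eq_zero_of_abs_lt_dvd (m := (p : ℤ) ^ m) ?_ ?_)
    · rw [← PadicInt.pow_dvd_intCast_iff]
      simpa [sub_sub_sub_cancel_left] using
        dvd_sub (hdvd m) ((pow_dvd_pow _ m.le_succ).trans (hdvd (m + 1)))
    · have : |(h (m + 1) : ℝ) - h m| < (p : ℝ) ^ m := by
        rw [habs] at hm hm'
        push_cast at hm'
        linarith [abs_sub (h (m + 1) : ℝ) (h m)]
      exact_mod_cast this
  obtain ⟨M, hM⟩ := eventuallyConst_atTop.1 (eventuallyConst_atTop_nat.2 (eventually_atTop.1 hstep))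
  refine ⟨h M, sub_eq_zero.1 (PadicInt.eq_zero_of_forall_pow_dvd fun m => ?_)⟩
  rw [← hM (max m M) (le_max_right m M)]
  exact (pow_dvd_pow _ (le_max_left m M)).trans (hdvd (max m M))

theorem eventually_mul_lt_padicDist {x : ℤ_[p]} (hx : ¬ IsPadicLiouville p x)
    (hxz : ∀ n : ℤ, x ≠ n) (C : ℝ) : ∀ᶠ m in atTop, C * m < padicDist p m x := by
  have htop : liminf (fun m : ℕ => (((padicDist p m x : ℝ) / (m : ℝ)) : EReal)) atTop = ⊤ := by
    by_contra hne
    exact hx ⟨hxz, lt_top_iff_ne_top.2 hne⟩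
  filter_upwards [eventually_lt_of_lt_liminf (htop ▸ EReal.coe_lt_top C), eventually_gt_atTop 0]
    with m hm hm0
  rw [← EReal.coe_div, EReal.coe_lt_coe_iff] at hm
  exact (lt_div_iff₀ (by exact_mod_cast hm0)).1 hm

end padicDist

section weaklyEquivalent

variable {p : ℕ} [Fact p.Prime] {n : ℕ} {a b : Fin n → ℤ_[p]} {c : ℝ}
  {s : ℕ → Equiv.Perm (Fin n)}

theorem eventually_sub_succ_eq_intCast
    (hs : ∀ m, 1 ≤ m → ∀ i, (padicDist p m (a (s m i) - b i) : ℝ) ≤ c * m)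
    (ha : ∀ j l, ¬ IsPadicLiouville p (a j - a l)) :
    ∀ᶠ m in atTop, ∀ i, ∃ k : ℤ, a (s (m + 1) i) - a (s m i) = k := by
  -- `3 * c * m` bounds `c * (m + 1) + c * m`, the triangle inequality through `b i`
  have hgrowth : ∀ᶠ m in atTop, ∀ j l, (∀ k : ℤ, a j - a l ≠ k) →
      3 * c * m < padicDist p m (a j - a l) := by
    simp only [eventually_all]
    exact fun j l hnotInt => eventually_mul_lt_padicDist (ha j l) hnotInt (3 * c)
  filter_upwards [hgrowth, eventually_ge_atTop 1] with m hgrowth hm i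
  by_contra! hnotInt
  have hle : padicDist p m (a (s (m + 1) i) - a (s m i))
      ≤ padicDist p (m + 1) (a (s (m + 1) i) - b i) + padicDist p m (a (s m i) - b i) :=
    calc _ = padicDist p m ((a (s (m + 1) i) - b i) - (a (s m i) - b i)) := by
          rw [sub_sub_sub_cancel_right]
      _ ≤ _ := padicDist_sub_le _ _ _
      _ ≤ _ := Nat.add_le_add_right (padicDist_monotone _ m.le_succ) _
  have h1 := hs (m + 1) (by omega) i
  have h2 := hs m hm i
  have hm' : (1 : ℝ) ≤ m := by exact_mod_cast hm
  have := hgrowth _ _ hnotInt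
  have hle' : (padicDist p m (a (s (m + 1) i) - a (s m i)) : ℝ)
      ≤ padicDist p (m + 1) (a (s (m + 1) i) - b i) + padicDist p m (a (s m i) - b i) := by
    exact_mod_cast hle
  push_cast at h1
  nlinarith

theorem exists_perm_forall_sub_eq_intCast
    (hs : ∀ m, 1 ≤ m → ∀ i, (padicDist p m (a (s m i) - b i) : ℝ) ≤ c * m)
    (ha : ∀ j l, ¬ IsPadicLiouville p (a j - a l)) :
    ∃ σ : Equiv.Perm (Fin n), ∀ i, ∃ k : ℤ, a (σ i) - b i = k := by
  obtain ⟨M, hM⟩ := eventually_atTop.1 (eventually_sub_succ_eq_intCast hs ha)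
  obtain ⟨K, hK⟩ := exists_natAbs_le_of_eq_intCast fun jl : Fin n × Fin n => a jl.1 - a jl.2
  refine ⟨s M, fun i => exists_eq_intCast_of_eventually_padicDist_le (C := c) (K := K) ?_⟩
  filter_upwards [eventually_ge_atTop M, eventually_ge_atTop 1] with m hmM hm
  obtain ⟨k, hk⟩ := exists_sub_eq_intCast_of_forall_succ (fun m hm => hM m hm i) m hmM
  have hle : padicDist p m (a (s M i) - b i) ≤ padicDist p m (a (s m i) - b i) + K :=
    calc _ = padicDist p m ((a (s m i) - b i) - k) := by rw [← hk, sub_sub_sub_cancel_left]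
      _ ≤ _ := padicDist_sub_le _ _ _
      _ ≤ _ := Nat.add_le_add_left ((padicDist_intCast_le m k).trans (hK (_, _) k hk)) _
  have hle' : (padicDist p m (a (s M i) - b i) : ℝ) ≤ padicDist p m (a (s m i) - b i) + K := by
    exact_mod_cast hle
  linarith [hs m hm i]

end weaklyEquivalent

theorem sub_mem_diffMultiset {p : ℕ} [Fact p.Prime] {A : Multiset ℤ_[p]} {x y : ℤ_[p]}
    (hx : x ∈ A) (hy : y ∈ A) : x - y ∈ diffMultiset p A :=
  Multiset.mem_bind.2 ⟨x, hx, Multiset.mem_map_of_mem _ hy⟩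

/-- If `A` and `B` are weakly equivalent finite multisets in `ℤ_p` and
`A` has p-adic non-Liouville differences, then `A` and `B` are equivalent. -/
theorem equivalent_of_weaklyEquivalent_of_nonLiouville_differences
    (p : ℕ) [Fact p.Prime] (A B : Multiset ℤ_[p])
    (h : WeaklyEquivalent p A B)
    (hA : PadicNonLiouvilleMultiset p (diffMultiset p A)) :
    EquivalentMultisets p A B := by
  obtain ⟨n, a, b, c, rfl, rfl, -, hσ⟩ := h
  choose! s hs using hσ
  have hmem : ∀ j, a j ∈ (List.ofFn a : Multiset ℤ_[p]) := fun j =>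
    Multiset.mem_coe.2 (List.mem_ofFn.2 ⟨j, rfl⟩)
  obtain ⟨σ, hσ⟩ := exists_perm_forall_sub_eq_intCast hs fun j l =>
    hA _ (sub_mem_diffMultiset (hmem j) (hmem l))
  exact ⟨n, a ∘ σ, b, Multiset.coe_eq_coe.2 (σ.ofFn_comp_perm a).symm, rfl, hσ⟩
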